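/- arXiv:0810.2286 — 3 statements merged into one kernel-verified Lean document; each statement's English description precedes it below -/
import Mathlib

section
/- Assume Φ is holomorphic in the bounded domain Ω ⊂ ℂ with Φ, Φ', Φ'' extending continuously to Ω̄, its critical set H = {z̃₁, …, z̃_ℓ} = {z ∈ Ω̄ : ∂_zΦ(z) = 0} satisfies H ∩ ∂Ω = ∅ and ∂_z²Φ(z) ≠ 0 for every z ∈ H. Let g ∈ C¹(Ω̄) satisfy g = 0 on H. Then there exists a constant C > 0 such that for every z ∈ Ω ∖ H: |∂_z( g/∂_zΦ )(z)| ≤ C / ∏_{k=1}^ℓ |z − z̃_k|. -/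
open MeasureTheory Complex Filter Metric ENNReal

noncomputable section

/-- Wirtinger derivative ∂_z = (1/2)(∂_{x₁} − i ∂_{x₂}). -/
def wDz (f : ℂ → ℂ) (z : ℂ) : ℂ :=
  (1 / 2 : ℂ) * (fderiv ℝ f z 1 - Complex.I * fderiv ℝ f z Complex.I)

/-- Wirtinger derivative ∂_{z̄} = (1/2)(∂_{x₁} + i ∂_{x₂}). -/
def wDzbar (f : ℂ → ℂ) (z : ℂ) : ℂ :=
  (1 / 2 : ℂ) * (fderiv ℝ f z 1 + Complex.I * fderiv ℝ f z Complex.I)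

/-- Cauchy transform (∂_{z̄}^{-1} g)(z) = −(1/π) ∫_Ω g(ζ)/(ζ − z) dA(ζ). -/
def cauchyT (Ω : Set ℂ) (g : ℂ → ℂ) (z : ℂ) : ℂ :=
  -(Real.pi : ℂ)⁻¹ * ∫ ζ in Ω, g ζ / (ζ - z)

/-- Conjugate Cauchy transform (∂_z^{-1} g)(z) = −(1/π) ∫_Ω g(ζ)/(conj ζ − conj z) dA(ζ). -/
def cauchyTbar (Ω : Set ℂ) (g : ℂ → ℂ) (z : ℂ) : ℂ :=
  -(Real.pi : ℂ)⁻¹ * ∫ ζ in Ω, g ζ / (starRingEnd ℂ ζ - starRingEnd ℂ z)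

/-- R_{Φ,τ} g = e^{τ(conj Φ − Φ)} ∂_{z̄}^{-1}( g e^{τ(Φ − conj Φ)} ). -/
def Rop (Ω : Set ℂ) (Φ : ℂ → ℂ) (τ : ℝ) (g : ℂ → ℂ) (z : ℂ) : ℂ :=
  Complex.exp ((τ : ℂ) * (starRingEnd ℂ (Φ z) - Φ z)) *
    cauchyT Ω (fun w => g w * Complex.exp ((τ : ℂ) * (Φ w - starRingEnd ℂ (Φ w)))) z

/-- R̃_{Φ,τ} g = e^{τ(conj Φ − Φ)} ∂_z^{-1}( g e^{τ(Φ − conj Φ)} ). -/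
def Rtop (Ω : Set ℂ) (Φ : ℂ → ℂ) (τ : ℝ) (g : ℂ → ℂ) (z : ℂ) : ℂ :=
  Complex.exp ((τ : ℂ) * (starRingEnd ℂ (Φ z) - Φ z)) *
    cauchyTbar Ω (fun w => g w * Complex.exp ((τ : ℂ) * (Φ w - starRingEnd ℂ (Φ w)))) z

/-!
At a critical point `z̃ₖ` the derivative `∂_zΦ` has a simple zero, so `|z - z̃ₖ| ≲ |∂_zΦ(z)|`
nearby; `g` and `∏ₖ (z - z̃ₖ)` are differentiable and vanish there, hence are `O(|z - z̃ₖ|)` and so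
`O(|∂_zΦ|)`, while away from the critical set `|∂_zΦ|` is bounded below. Compactness of `Ω̄` turns
these local bounds into `g = O(∂_zΦ)` and `∏ₖ (z - z̃ₖ) = O(∂_zΦ)` on `Ω̄`. Finally
`∂_z(g/∂_zΦ) = (∂_z g - (g/∂_zΦ) ∂_z²Φ) / ∂_zΦ` has a bounded numerator, so it is
`O(1/∂_zΦ) = O(1/∏ₖ |z - z̃ₖ|)`.
-/

open Set Topology Asymptotics

theorem IsCompact.isBigO_principal_of_forall_nhdsWithin {α E F : Type*} [TopologicalSpace α]
    [Norm E] [SeminormedAddCommGroup F] {K s : Set α} (hK : IsCompact K) {u : α → E} {f : α → F}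
    (h : ∀ x ∈ K, u =O[𝓝[s] x] f) : u =O[𝓟 (K ∩ s)] f := by
  refine hK.induction_on (p := fun t => u =O[𝓟 (t ∩ s)] f) (by simp) ?_ ?_ ?_
  · exact fun t t' htt' ht' => ht'.mono (principal_mono.2 (inter_subset_inter_left s htt'))
  · intro t t' ht ht'
    rw [union_inter_distrib_right, ← sup_principal]
    exact ht.sup ht'
  · intro x hx
    obtain ⟨c, hc⟩ := isBigO_iff.1 (h x hx)
    obtain ⟨A, hA, hAs⟩ := mem_nhdsWithin_iff_exists_mem_nhds_inter.1 hc
    exact ⟨A, mem_nhdsWithin_of_mem_nhds hA, isBigO_principal.2 ⟨c, fun z hz => hAs hz⟩⟩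

theorem ContDiffOn.isBigO_fderiv_interior {𝕜 E F : Type*} [NontriviallyNormedField 𝕜]
    [NormedAddCommGroup E] [NormedSpace 𝕜 E] [NormedAddCommGroup F] [NormedSpace 𝕜 F]
    {K : Set E} {g : E → F} (hg : ContDiffOn 𝕜 1 g K) (hK : IsCompact K) :
    fderiv 𝕜 g =O[𝓟 (interior K)] (fun _ => (1 : ℝ)) := by
  rw [← inter_eq_right.2 interior_subset]
  refine hK.isBigO_principal_of_forall_nhdsWithin fun x hx => ?_
  have hx' : ContDiffWithinAt 𝕜 (0 + 1) g K x := by simpa using hg x hx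
  obtain ⟨u, hu, -, -, g', hg'u, hg'c⟩ :=
    (contDiffWithinAt_succ_iff_hasFDerivWithinAt' (by simp)).1 hx'
  rw [insert_eq_of_mem hx] at hu
  have hfderiv : g' =ᶠ[𝓝[interior K] x] fderiv 𝕜 g := by
    filter_upwards [nhdsWithin_mono x interior_subset hu, self_mem_nhdsWithin] with z hzu hzK
    exact ((hg'u z hzu).hasFDerivAt (mem_interior_iff_mem_nhds.1 hzK)).fderiv.symm
  exact ((hg'c.continuousWithinAt.mono interior_subset).tendsto.isBigO_one ℝ).congr'
    hfderiv EventuallyEq.rfl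

theorem HasDerivAt.isBigO_of_eq_zero {𝕜 E F : Type*} [RCLike 𝕜] [NormedAddCommGroup E]
    [NormedSpace 𝕜 E] [NormedAddCommGroup F] [NormedSpace ℝ F] {f : 𝕜 → E} {d : E} {a : 𝕜}
    (hf : HasDerivAt f d a) (hd : d ≠ 0) (hfa : f a = 0) {h : 𝕜 → F}
    (hh : DifferentiableAt ℝ h a) (hha : h a = 0) : h =O[𝓝 a] f := by
  have hh_sub : h =O[𝓝 a] (· - a) := by simpa [hha] using hh.isBigO_sub
  have hsub_f : (· - a) =O[𝓝 a] f := by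
    simpa [Function.comp_def, hfa] using (hf.isTheta_sub hd).isBigO_symm.comp_tendsto
      (tendsto_id.prodMk (tendsto_const_pure (b := a)))
  exact hh_sub.trans hsub_f

theorem IsCompact.isBigO_principal_of_simple_zeros {𝕜 E F : Type*} [RCLike 𝕜]
    [NormedAddCommGroup E] [NormedSpace 𝕜 E] [NormedAddCommGroup F] [NormedSpace ℝ F]
    {K : Set 𝕜} (hK : IsCompact K) {f : 𝕜 → E} {h : 𝕜 → F}
    (hf : ContinuousOn f K) (hh : ContinuousOn h K)
    (hsimple : ∀ a ∈ K, f a = 0 → ∃ d ≠ 0, HasDerivAt f d a)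
    (hh_diff : ∀ a ∈ K, f a = 0 → DifferentiableAt ℝ h a)
    (hh_zero : ∀ a ∈ K, f a = 0 → h a = 0) : h =O[𝓟 K] f := by
  rw [← inter_self K]
  refine hK.isBigO_principal_of_forall_nhdsWithin fun x hx => ?_
  by_cases hfx : f x = 0
  · obtain ⟨d, hd, hfd⟩ := hsimple x hx hfx
    exact (hfd.isBigO_of_eq_zero hd hfx (hh_diff x hx hfx) (hh_zero x hx hfx)).mono
      nhdsWithin_le_nhds
  · have hf_away : ∀ᶠ z in 𝓝[K] x, ‖f x‖ / 2 ≤ ‖f z‖ :=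
      ((hf x hx).norm.eventually_const_lt (half_lt_self (norm_pos_iff.2 hfx))).mono
        fun _ => le_of_lt
    exact ((hh x hx).tendsto.isBigO_one ℝ).trans
      ((isBigO_const_left_iff_pos_le_norm one_ne_zero).2
        ⟨‖f x‖ / 2, half_pos (norm_pos_iff.2 hfx), hf_away⟩)

theorem IsOpen.isBigO_closure_of_simple_zeros {𝕜 E F : Type*} [RCLike 𝕜]
    [NormedAddCommGroup E] [NormedSpace 𝕜 E] [NormedAddCommGroup F] [NormedSpace ℝ F]
    {Ω : Set 𝕜} (hΩo : IsOpen Ω) (hΩb : Bornology.IsBounded Ω) {f f' : 𝕜 → E}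
    {h : 𝕜 → F} (hf : ∀ z ∈ Ω, HasDerivAt f (f' z) z) (hfc : ContinuousOn f (closure Ω))
    (hbd : ∀ z ∈ frontier Ω, f z ≠ 0) (hnd : ∀ z ∈ closure Ω, f z = 0 → f' z ≠ 0)
    (hh : ContinuousOn h (closure Ω)) (hh_diff : ∀ z ∈ Ω, DifferentiableAt ℝ h z)
    (hh_zero : ∀ z ∈ closure Ω, f z = 0 → h z = 0) : h =O[𝓟 (closure Ω)] f := by
  have hzeros : ∀ a ∈ closure Ω, f a = 0 → a ∈ Ω := fun a ha h0 =>
    by_contra fun ha' => hbd a (hΩo.frontier_eq ▸ ⟨ha, ha'⟩) h0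
  exact hΩb.isCompact_closure.isBigO_principal_of_simple_zeros hfc hh
    (fun a ha h0 => ⟨f' a, hnd a ha h0, hf a (hzeros a ha h0)⟩)
    (fun a ha h0 => hh_diff a (hzeros a ha h0)) hh_zero

theorem HasFDerivAt.wDz_eq {f : ℂ → ℂ} {L : ℂ →L[ℝ] ℂ} {z : ℂ} (h : HasFDerivAt f L z) :
    wDz f z = (1 / 2 : ℂ) * (L 1 - I * L I) := by
  rw [wDz, h.fderiv]

theorem HasDerivAt.wDz_eq {f : ℂ → ℂ} {f' z : ℂ} (h : HasDerivAt f f' z) : wDz f z = f' := by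
  rw [(h.hasFDerivAt.restrictScalars ℝ).wDz_eq]
  simp only [ContinuousLinearMap.coe_restrictScalars', ContinuousLinearMap.toSpanSingleton_apply,
    smul_eq_mul]
  linear_combination (-(1 / 2 : ℂ) * f') * I_sq

theorem wDz_mul {f g : ℂ → ℂ} {z : ℂ} (hf : DifferentiableAt ℝ f z)
    (hg : DifferentiableAt ℝ g z) :
    wDz (fun w => f w * g w) z = wDz f z * g z + f z * wDz g z := by
  have hfg : HasFDerivAt (fun w => f w * g w) _ z := hf.hasFDerivAt.mul hg.hasFDerivAt
  rw [hfg.wDz_eq, wDz, wDz]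
  simp only [add_apply, smul_apply, smul_eq_mul]
  ring

theorem wDz_div_of_hasDerivAt {g f : ℂ → ℂ} {f' z : ℂ} (hg : DifferentiableAt ℝ g z)
    (hf : HasDerivAt f f' z) (hfz : f z ≠ 0) :
    wDz (fun w => g w / f w) z = wDz g z / f z - g z * f' / f z ^ 2 := by
  have hinv : HasDerivAt (fun w => (f w)⁻¹) _ z := hf.inv hfz
  simp only [div_eq_mul_inv (g _)]
  rw [wDz_mul hg (hinv.differentiableAt.restrictScalars ℝ), hinv.wDz_eq]
  ring

theorem norm_wDz_le (f : ℂ → ℂ) (z : ℂ) : ‖wDz f z‖ ≤ ‖fderiv ℝ f z‖ := by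
  have h1 := (fderiv ℝ f z).le_opNorm 1
  have hI := (fderiv ℝ f z).le_opNorm I
  rw [norm_one, mul_one] at h1
  rw [norm_I, mul_one] at hI
  calc ‖wDz f z‖ ≤ 1 / 2 * (‖fderiv ℝ f z 1‖ + ‖fderiv ℝ f z I‖) := by
        rw [wDz, norm_mul]
        simpa using norm_sub_le (fderiv ℝ f z 1) (I * fderiv ℝ f z I)
    _ ≤ ‖fderiv ℝ f z‖ := by linarith

theorem isBigO_wDz_div {l : Filter ℂ} {g f f' : ℂ → ℂ}
    (hg : ∀ᶠ z in l, DifferentiableAt ℝ g z) (hf : ∀ᶠ z in l, HasDerivAt f (f' z) z)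
    (hf0 : ∀ᶠ z in l, f z ≠ 0) (hDg : fderiv ℝ g =O[l] (fun _ => (1 : ℝ)))
    (hgf : g =O[l] f) (hf' : f' =O[l] (fun _ => (1 : ℝ))) :
    (fun z => wDz (fun w => g w / f w) z) =O[l] fun z => (f z)⁻¹ := by
  have hwDz : wDz g =O[l] (fun _ => (1 : ℝ)) := (isBigO_of_le l (norm_wDz_le g)).trans hDg
  have hquot : (fun z => g z / f z) =O[l] (fun _ => (1 : ℝ)) :=
    ((hgf.mul (isBigO_refl (fun z => (f z)⁻¹) l)).congr'
      (Eventually.of_forall fun z => (div_eq_mul_inv _ _).symm)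
      (hf0.mono fun z hz => mul_inv_cancel₀ hz)).trans (isBigO_const_const _ one_ne_zero _)
  have hnum : (fun z => wDz g z - g z / f z * f' z) =O[l] (fun _ => (1 : ℂ)) :=
    (hwDz.sub (by simpa using hquot.mul hf')).trans (isBigO_const_const _ one_ne_zero _)
  have hprod : (fun z => (wDz g z - g z / f z * f' z) * (f z)⁻¹) =O[l] fun z => (f z)⁻¹ := by
    simpa using hnum.mul (isBigO_refl (fun z => (f z)⁻¹) l)
  refine hprod.congr' ?_ EventuallyEq.rfl
  filter_upwards [hg, hf, hf0] with z hgz hfz hf0z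
  rw [wDz_div_of_hasDerivAt hgz hfz hf0z]
  field_simp

theorem wirtinger_quotient_bound_general
    (Ω : Set ℂ) (hΩo : IsOpen Ω) (hΩb : Bornology.IsBounded Ω)
    (Φ' Φ'' : ℂ → ℂ)
    (hd2 : ∀ z ∈ Ω, HasDerivAt Φ' (Φ'' z) z)
    (hc1 : ContinuousOn Φ' (closure Ω))
    (hc2 : ContinuousOn Φ'' (closure Ω))
    (hbd : ∀ z ∈ frontier Ω, Φ' z ≠ 0)
    (hnd : ∀ z ∈ closure Ω, Φ' z = 0 → Φ'' z ≠ 0)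
    (l : ℕ) (zt : Fin l → ℂ)
    (hzt : {z : ℂ | z ∈ closure Ω ∧ Φ' z = 0} = Set.range zt)
    (g : ℂ → ℂ) (hg : ContDiffOn ℝ 1 g (closure Ω))
    (hgH : ∀ z ∈ closure Ω, Φ' z = 0 → g z = 0) :
    ∃ C > 0, ∀ z ∈ Ω, Φ' z ≠ 0 →
      ‖wDz (fun w => g w / Φ' w) z‖ ≤ C / ∏ k, ‖z - zt k‖ := by
  have hK : IsCompact (closure Ω) := hΩb.isCompact_closure
  have hnhds : ∀ z ∈ Ω, closure Ω ∈ 𝓝 z :=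
    fun z hz => mem_of_superset (hΩo.mem_nhds hz) subset_closure
  have hgdiff : ∀ z ∈ Ω, DifferentiableAt ℝ g z :=
    fun z hz => (hg.contDiffAt (hnhds z hz)).differentiableAt one_ne_zero
  have hprod_eq_zero : ∀ z, ∏ k, (z - zt k) = 0 ↔ z ∈ closure Ω ∧ Φ' z = 0 := fun z => by
    simpa [Finset.prod_eq_zero_iff, sub_eq_zero, eq_comm (b := z)] using
      (Set.ext_iff.1 hzt z).symm
  have hgΦ : g =O[𝓟 (closure Ω)] Φ' :=
    hΩo.isBigO_closure_of_simple_zeros hΩb hd2 hc1 hbd hnd hg.continuousOn hgdiff hgH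
  have hprodΦ : (fun z => ∏ k, (z - zt k)) =O[𝓟 (closure Ω)] Φ' :=
    hΩo.isBigO_closure_of_simple_zeros hΩb hd2 hc1 hbd hnd (by fun_prop) (fun _ _ => by fun_prop)
      fun z hz h0 => (hprod_eq_zero z).2 ⟨hz, h0⟩
  set S := {z | z ∈ Ω ∧ Φ' z ≠ 0}
  have hS_le : 𝓟 S ≤ 𝓟 (closure Ω) := principal_mono.2 fun z hz => subset_closure hz.1
  have hquot : (fun z => wDz (fun w => g w / Φ' w) z) =O[𝓟 S] fun z => (Φ' z)⁻¹ :=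
    isBigO_wDz_div (eventually_principal.2 fun z hz => hgdiff z hz.1)
      (eventually_principal.2 fun z hz => hd2 z hz.1) (eventually_principal.2 fun z hz => hz.2)
      ((hg.isBigO_fderiv_interior hK).mono
        (principal_mono.2 fun z hz => mem_interior_iff_mem_nhds.2 (hnhds z hz.1)))
      (hgΦ.mono hS_le) ((hc2.isBigO_principal hK (c := (1 : ℝ)) (by simp)).mono hS_le)
  have hinv : (fun z => (Φ' z)⁻¹) =O[𝓟 S] fun z => (∏ k, (z - zt k))⁻¹ :=
    (hprodΦ.mono hS_le).inv_rev (Eventually.of_forall fun z hz => ((hprod_eq_zero z).1 hz).2)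
  obtain ⟨C, hC, hbound⟩ := (hquot.trans hinv).exists_pos
  refine ⟨C, hC, fun z hz hz' => ?_⟩
  simpa [norm_prod, div_eq_mul_inv] using isBigOWith_principal.1 hbound z ⟨hz, hz'⟩

/-- Pointwise bound for the Wirtinger derivative of the quotient g/∂_zΦ when g ∈ C¹(Ω̄)
vanishes on the (nondegenerate, interior) critical set {z̃₁,…,z̃_ℓ} of Φ:
|∂_z(g/∂_zΦ)(z)| ≤ C / ∏ₖ |z − z̃ₖ| on Ω ∖ H. -/
theorem wirtinger_quotient_bound
    (Ω : Set ℂ) (hΩo : IsOpen Ω) (hΩc : IsConnected Ω) (hΩb : Bornology.IsBounded Ω)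
    (Φ Φ' Φ'' : ℂ → ℂ)
    (hd1 : ∀ z ∈ Ω, HasDerivAt Φ (Φ' z) z)
    (hd2 : ∀ z ∈ Ω, HasDerivAt Φ' (Φ'' z) z)
    (hc0 : ContinuousOn Φ (closure Ω))
    (hc1 : ContinuousOn Φ' (closure Ω))
    (hc2 : ContinuousOn Φ'' (closure Ω))
    (hbd : ∀ z ∈ frontier Ω, Φ' z ≠ 0)
    (hnd : ∀ z ∈ closure Ω, Φ' z = 0 → Φ'' z ≠ 0)
    (l : ℕ) (zt : Fin l → ℂ) (hztinj : Function.Injective zt)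
    (hzt : {z : ℂ | z ∈ closure Ω ∧ Φ' z = 0} = Set.range zt)
    (g : ℂ → ℂ) (hg : ContDiffOn ℝ 1 g (closure Ω))
    (hgH : ∀ z ∈ closure Ω, Φ' z = 0 → g z = 0) :
    ∃ C > 0, ∀ z ∈ Ω, Φ' z ≠ 0 →
      ‖wDz (fun w => g w / Φ' w) z‖ ≤ C / ∏ k, ‖z - zt k‖ :=
  wirtinger_quotient_bound_general Ω hΩo hΩb Φ' Φ'' hd2 hc1 hc2 hbd hnd l zt hzt g hg hgH

end
end

section
/- Let Ω ⊂ ℂ be a bounded open set, Φ holomorphic on Ω with ψ = Im Φ, and let τ ∈ ℝ. Let v ∈ C_c^∞(Ω; ℂ) be smooth with compact support in Ω (so all boundary terms of the general identity vanish). If f = 2∂_z v − τ(∂_zΦ)v on Ω, then ∫_Ω |∂_{x₁}(e^{−iτψ}v)|² dx + ∫_Ω |∂_{x₂}(e^{−iτψ}v)|² dx = ∫_Ω |f|² dx. Similarly, if f = 2∂_{z̄}v − τ·conj(∂_zΦ)·v on Ω, then ∫_Ω |∂_{x₁}(e^{iτψ}v)|² dx + ∫_Ω |∂_{x₂}(e^{iτψ}v)|²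 dx = ∫_Ω |f|² dx. -/
open MeasureTheory Complex Filter Metric ENNReal

noncomputable section

def Bf : ℂ →L[ℝ] ℂ →L[ℝ] ℝ :=
  LinearMap.mkContinuous₂
    (LinearMap.mk₂ ℝ (fun a b => (a * (starRingEnd ℂ) b).im)
      (by intros; simp [add_mul])
      (by intros; simp [Complex.smul_im]; ring)
      (by intros; simp [mul_add])
      (by intros; simp [Complex.smul_im]; ring))
    1 (fun a b => by
      calc |(a * (starRingEnd ℂ) b).im| ≤ ‖a * (starRingEnd ℂ) b‖ :=
            Complex.abs_im_le_norm _
        _ = 1 * ‖a‖ * ‖b‖ := by rw [norm_mul]; simp [one_mul])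
example (a b : ℂ) : Bf a b = (a * (starRingEnd ℂ) b).im := rfl

lemma Bf_antisymm (a b : ℂ) : Bf a b = - Bf b a := by
  show (a * (starRingEnd ℂ) b).im = - (b * (starRingEnd ℂ) a).im
  simp [Complex.mul_im]; ring

lemma fderiv_zero_out {g : ℂ → ℂ} {x : ℂ} (hx : x ∉ tsupport g) : fderiv ℝ g x = 0 := by
  by_contra h
  exact hx (support_fderiv_subset ℝ (Function.mem_support.2 h))

lemma key {g : ℂ → ℂ} (hg : ContDiff ℝ 2 g) (hgs : HasCompactSupport g) :
    ∫ z : ℂ, (fderiv ℝ g z 1 * (starRingEnd ℂ) (fderiv ℝ g z Complex.I)).im = 0 := by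
  have hg1 : ContDiff ℝ 1 (fderiv ℝ g) := hg.fderiv_right (by norm_num)
  have hgd : Differentiable ℝ g := hg.differentiable (by norm_num)
  set a1 : ℂ → ℂ := fun z => fderiv ℝ g z 1 with ha1
  set aI : ℂ → ℂ := fun z => fderiv ℝ g z Complex.I with haI
  have ha1cd : ContDiff ℝ 1 a1 := hg1.clm_apply contDiff_const
  have haIcd : ContDiff ℝ 1 aI := hg1.clm_apply contDiff_const
  have hts : ∀ x, x ∉ tsupport g → g x = 0 ∧ fderiv ℝ g x = 0 ∧
      fderiv ℝ a1 x = 0 ∧ fderiv ℝ aI x = 0 := by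
    intro x hx
    have hsub : tsupport a1 ⊆ tsupport g := by
      refine closure_minimal (fun y hy => ?_) isClosed_closure
      by_contra h
      exact hy (by simp [ha1, fderiv_zero_out h])
    have hsubI : tsupport aI ⊆ tsupport g := by
      refine closure_minimal (fun y hy => ?_) isClosed_closure
      by_contra h
      exact hy (by simp [haI, fderiv_zero_out h])
    exact ⟨image_eq_zero_of_notMem_tsupport hx, fderiv_zero_out hx,
      fderiv_zero_out (fun h => hx (hsub h)), fderiv_zero_out (fun h => hx (hsubI h))⟩
  -- continuity facts
  have hc1 : Continuous a1 := ha1cd.continuous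
  have hcI : Continuous aI := haIcd.continuous
  have hcg : Continuous g := hg.continuous
  have hca1' : Continuous (fderiv ℝ a1) := (ha1cd.fderiv_right (m := 0) (by norm_num)).continuous
  have hcaI' : Continuous (fderiv ℝ aI) := (haIcd.fderiv_right (m := 0) (by norm_num)).continuous
  -- second derivative expressions
  have hda1 : ∀ x, fderiv ℝ a1 x Complex.I = fderiv ℝ (fderiv ℝ g) x Complex.I 1 := by
    intro x
    rw [ha1]
    rw [fderiv_clm_apply (hg1.differentiable one_ne_zero x) (differentiableAt_const _)]
    simp
  have hdaI : ∀ x, fderiv ℝ aI x 1 = fderiv ℝ (fderiv ℝ g) x 1 Complex.I := by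
    intro x
    rw [haI]
    rw [fderiv_clm_apply (hg1.differentiable one_ne_zero x) (differentiableAt_const _)]
    simp
  have hsymm : ∀ x, fderiv ℝ (fderiv ℝ g) x Complex.I 1 = fderiv ℝ (fderiv ℝ g) x 1 Complex.I :=
    fun x => (hg.contDiffAt.isSymmSndFDerivAt (by simp)) Complex.I 1
  -- integrability helper
  have mkInt : ∀ (u w : ℂ → ℂ), Continuous u → Continuous w →
      (∀ x, x ∉ tsupport g → u x = 0 ∨ w x = 0) →
      Integrable (fun x => Bf (u x) (w x)) := by
    intro u w hu hw hz
    apply Continuous.integrable_of_hasCompactSupport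
    · exact Complex.continuous_im.comp ((hu.mul (Complex.continuous_conj.comp hw)))
    · apply HasCompactSupport.intro hgs
      intro x hx
      rcases hz x hx with h | h <;> simp [h, Bf]
  have int1 : Integrable (fun x => Bf (a1 x) (fderiv ℝ g x Complex.I)) :=
    mkInt _ _ hc1 (hg1.continuous.clm_apply continuous_const)
      (fun x hx => Or.inr (by rw [(hts x hx).2.1]; rfl))
  have int2 : Integrable (fun x => Bf (fderiv ℝ a1 x Complex.I) (g x)) :=
    mkInt _ _ (hca1'.clm_apply continuous_const) hcg (fun x hx => Or.inr (hts x hx).1)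
  have int3 : Integrable (fun x => Bf (a1 x) (g x)) :=
    mkInt _ _ hc1 hcg (fun x hx => Or.inr (hts x hx).1)
  have int3b : Integrable (fun x => Bf (aI x) (g x)) :=
    mkInt _ _ hcI hcg (fun x hx => Or.inr (hts x hx).1)
  have int4 : Integrable (fun x => Bf (aI x) (fderiv ℝ g x 1)) :=
    mkInt _ _ hcI (hg1.continuous.clm_apply continuous_const)
      (fun x hx => Or.inr (by rw [(hts x hx).2.1]; rfl))
  have int5 : Integrable (fun x => Bf (fderiv ℝ aI x 1) (g x)) :=
    mkInt _ _ (hcaI'.clm_apply continuous_const) hcg (fun x hx => Or.inr (hts x hx).1)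
  have ibp1 := integral_bilinear_fderiv_right_eq_neg_left_of_integrable (μ := volume)
    (B := Bf) (f := a1) (g := g) (v := Complex.I) int2 int1 int3
    (fun x _ => ha1cd.differentiable one_ne_zero x) (fun x _ => hgd x)
  have ibp2 := integral_bilinear_fderiv_right_eq_neg_left_of_integrable (μ := volume)
    (B := Bf) (f := aI) (g := g) (v := 1) int5 int4 int3b
    (fun x _ => haIcd.differentiable one_ne_zero x) (fun x _ => hgd x)
  -- ibp1 : ∫ Bf (a1 x) (fderiv g x I) = - ∫ Bf (fderiv a1 x I) (g x)
  -- ibp2 : ∫ Bf (aI x) (fderiv g x 1) = - ∫ Bf (fderiv aI x 1) (g x)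
  have e1 : ∀ x, Bf (fderiv ℝ a1 x Complex.I) (g x) = Bf (fderiv ℝ aI x 1) (g x) := by
    intro x; rw [hda1, hdaI, hsymm]
  have e2 : ∀ x, Bf (aI x) (fderiv ℝ g x 1) = - Bf (a1 x) (fderiv ℝ g x Complex.I) := by
    intro x; rw [Bf_antisymm]
  have J0 : (∫ x : ℂ, Bf (a1 x) (fderiv ℝ g x Complex.I)) = 0 := by
    have h2 : (∫ x : ℂ, Bf (aI x) (fderiv ℝ g x 1)) =
        - ∫ x : ℂ, Bf (a1 x) (fderiv ℝ g x Complex.I) := by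
      rw [← integral_neg]; exact integral_congr_ae (Filter.Eventually.of_forall e2)
    have h1 : (∫ x : ℂ, Bf (fderiv ℝ a1 x Complex.I) (g x)) =
        ∫ x : ℂ, Bf (fderiv ℝ aI x 1) (g x) :=
      integral_congr_ae (Filter.Eventually.of_forall e1)
    have := ibp1.trans (by rw [h1, ← ibp2, h2])
    linarith
  simpa [Bf] using J0

lemma norm_sq_sub (a b : ℂ) :
    ‖a‖^2 + ‖b‖^2 = ‖a - Complex.I*b‖^2 + 2*(a * (starRingEnd ℂ) b).im := by
  simp only [Complex.sq_norm, Complex.normSq_apply, Complex.sub_re,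
    Complex.sub_im, Complex.mul_re, Complex.mul_im, Complex.I_re, Complex.I_im,
    Complex.conj_re, Complex.conj_im]
  ring

lemma norm_sq_add (a b : ℂ) :
    ‖a‖^2 + ‖b‖^2 = ‖a + Complex.I*b‖^2 - 2*(a * (starRingEnd ℂ) b).im := by
  simp only [Complex.sq_norm, Complex.normSq_apply, Complex.add_re,
    Complex.add_im, Complex.mul_re, Complex.mul_im, Complex.I_re, Complex.I_im,
    Complex.conj_re, Complex.conj_im]
  ring

lemma integral_aux (Ω : Set ℂ) (g F : ℂ → ℂ) (ε : ℝ)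
    (hg : ContDiff ℝ 2 g) (hgs : HasCompactSupport g)
    (hF : Continuous F) (hFs : HasCompactSupport F)
    (hg0 : ∀ z, z ∉ Ω → fderiv ℝ g z = 0) (hF0 : ∀ z, z ∉ Ω → F z = 0)
    (hpt : ∀ z, ‖fderiv ℝ g z 1‖^2 + ‖fderiv ℝ g z Complex.I‖^2
        = ‖F z‖^2 + ε*((fderiv ℝ g z 1) * (starRingEnd ℂ) (fderiv ℝ g z Complex.I)).im) :
    (∫ z in Ω, ‖fderiv ℝ g z 1‖^2) + (∫ z in Ω, ‖fderiv ℝ g z Complex.I‖^2)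
      = ∫ z in Ω, ‖F z‖^2 := by
  have hg1c : Continuous (fderiv ℝ g) := (hg.fderiv_right (m := 1) (by norm_num)).continuous
  have h1 : (∫ z in Ω, ‖fderiv ℝ g z 1‖^2) = ∫ z : ℂ, ‖fderiv ℝ g z 1‖^2 :=
    setIntegral_eq_integral_of_forall_compl_eq_zero (fun x hx => by simp [hg0 x hx])
  have h2 : (∫ z in Ω, ‖fderiv ℝ g z Complex.I‖^2) = ∫ z : ℂ, ‖fderiv ℝ g z Complex.I‖^2 :=
    setIntegral_eq_integral_of_forall_compl_eq_zero (fun x hx => by simp [hg0 x hx])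
  have h3 : (∫ z in Ω, ‖F z‖^2) = ∫ z : ℂ, ‖F z‖^2 :=
    setIntegral_eq_integral_of_forall_compl_eq_zero (fun x hx => by simp [hF0 x hx])
  have iu1 : Integrable (fun z : ℂ => ‖fderiv ℝ g z 1‖^2) := by
    apply Continuous.integrable_of_hasCompactSupport
    · exact ((hg1c.clm_apply continuous_const).norm.pow 2)
    · exact HasCompactSupport.intro hgs (fun x hx => by simp [fderiv_zero_out hx])
  have iu2 : Integrable (fun z : ℂ => ‖fderiv ℝ g z Complex.I‖^2) := by
    apply Continuous.integrable_of_hasCompactSupport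
    · exact ((hg1c.clm_apply continuous_const).norm.pow 2)
    · exact HasCompactSupport.intro hgs (fun x hx => by simp [fderiv_zero_out hx])
  have iF : Integrable (fun z : ℂ => ‖F z‖^2) := by
    apply Continuous.integrable_of_hasCompactSupport (hF.norm.pow 2)
    exact HasCompactSupport.intro hFs
      (fun x hx => by simp [image_eq_zero_of_notMem_tsupport hx])
  have iw : Integrable (fun z : ℂ =>
      ((fderiv ℝ g z 1) * (starRingEnd ℂ) (fderiv ℝ g z Complex.I)).im) := by
    apply Continuous.integrable_of_hasCompactSupport
    · exact Complex.continuous_im.comp ((hg1c.clm_apply continuous_const).mul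
        (Complex.continuous_conj.comp (hg1c.clm_apply continuous_const)))
    · exact HasCompactSupport.intro hgs (fun x hx => by simp [fderiv_zero_out hx])
  rw [h1, h2, h3, ← integral_add iu1 iu2]
  have : (fun z : ℂ => ‖fderiv ℝ g z 1‖^2 + ‖fderiv ℝ g z Complex.I‖^2)
      = fun z : ℂ => ‖F z‖^2 + ε*((fderiv ℝ g z 1) * (starRingEnd ℂ)
          (fderiv ℝ g z Complex.I)).im := funext hpt
  rw [this, integral_add iF (iw.const_mul ε), MeasureTheory.integral_const_mul,
    key (by exact hg) hgs, mul_zero, add_zero]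

lemma fderiv_g_eq (s : ℂ) (Φ v : ℂ → ℂ) (z c : ℂ)
    (hΦ : HasDerivAt Φ c z) (hv : DifferentiableAt ℝ v z) (u : ℂ) :
    fderiv ℝ (fun w => Complex.exp (s * ((Φ w).im : ℂ)) * v w) z u
      = Complex.exp (s * ((Φ z).im : ℂ)) *
          (fderiv ℝ v z u + s * (((u * c).im : ℝ) : ℂ) * v z) := by
  have hΦR : HasFDerivAt Φ ((ContinuousLinearMap.smulRight (1 : ℂ →L[ℂ] ℂ) c).restrictScalars ℝ)
      z := hΦ.hasFDerivAt.restrictScalars ℝ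
  have hψ : HasFDerivAt (fun w => (((Φ w).im : ℝ) : ℂ))
      (Complex.ofRealCLM.comp (Complex.imCLM.comp
        ((ContinuousLinearMap.smulRight (1 : ℂ →L[ℂ] ℂ) c).restrictScalars ℝ))) z :=
    Complex.ofRealCLM.hasFDerivAt.comp z (Complex.imCLM.hasFDerivAt.comp z hΦR)
  have hmul := hψ.const_mul s
  have hexp := hmul.cexp
  have hg : HasFDerivAt (fun w => Complex.exp (s * ((Φ w).im : ℂ)) * v w) _ z :=
    hexp.mul hv.hasFDerivAt
  rw [hg.fderiv]
  simp only [ContinuousLinearMap.add_apply, ContinuousLinearMap.smul_apply,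
    ContinuousLinearMap.coe_comp', Function.comp_apply,
    ContinuousLinearMap.coe_restrictScalars', ContinuousLinearMap.smulRight_apply,
    ContinuousLinearMap.one_apply, Complex.ofRealCLM_apply, Complex.imCLM_apply,
    smul_eq_mul]
  ring

lemma mul_v_eventually_zero {v : ℂ → ℂ} {z : ℂ} (hz : z ∉ tsupport v) (c : ℂ → ℂ) :
    (fun w => c w * v w) =ᶠ[nhds z] 0 := by
  filter_upwards [(isClosed_tsupport v).isOpen_compl.mem_nhds hz] with w hw
  simp [image_eq_zero_of_notMem_tsupport hw]

lemma smooth_g (Ω : Set ℂ) (hΩo : IsOpen Ω) (Φ : ℂ → ℂ) (hΦ : DifferentiableOn ℂ Φ Ω)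
    (v : ℂ → ℂ) (hv : ContDiff ℝ 2 v) (hvΩ : tsupport v ⊆ Ω) (s : ℂ) :
    ContDiff ℝ 2 (fun w => Complex.exp (s * ((Φ w).im : ℂ)) * v w) := by
  rw [contDiff_iff_contDiffAt]
  intro z
  by_cases hz : z ∈ Ω
  · have hA : AnalyticAt ℂ Φ z := hΦ.analyticAt (hΩo.mem_nhds hz)
    have h1 : ContDiffAt ℝ 2 Φ z := (hA.contDiffAt).restrict_scalars ℝ
    have hψ : ContDiffAt ℝ 2 (fun w => (((Φ w).im : ℝ) : ℂ)) z :=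
      Complex.ofRealCLM.contDiff.contDiffAt.comp z
        (Complex.imCLM.contDiff.contDiffAt.comp z h1)
    exact ((Complex.contDiff_exp.contDiffAt).comp z (contDiffAt_const.mul hψ)).mul hv.contDiffAt
  · have hz' : z ∉ tsupport v := fun h => hz (hvΩ h)
    exact contDiffAt_const.congr_of_eventuallyEq (mul_v_eventually_zero hz' _)

lemma F_continuous (Ω : Set ℂ) (hΩo : IsOpen Ω) (Φ : ℂ → ℂ) (hΦ : DifferentiableOn ℂ Φ Ω)
    (v : ℂ → ℂ) (hv : ContDiff ℝ 2 v) (hvΩ : tsupport v ⊆ Ω)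
    (G : ℂ → ℂ) (hG : ∀ z ∈ Ω, ContinuousAt G z)
    (hG0 : ∀ z ∉ tsupport v, G z = 0) : Continuous G := by
  rw [continuous_iff_continuousAt]
  intro z
  by_cases hz : z ∈ Ω
  · exact hG z hz
  · have hz' : z ∉ tsupport v := fun h => hz (hvΩ h)
    have hev : (fun _ : ℂ => (0:ℂ)) =ᶠ[nhds z] G := by
      filter_upwards [(isClosed_tsupport v).isOpen_compl.mem_nhds hz'] with w hw
      exact (hG0 w hw).symm
    exact continuousAt_const.congr hev

lemma derivPhi_continuousAt (Ω : Set ℂ) (hΩo : IsOpen Ω) (Φ : ℂ → ℂ)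
    (hΦ : DifferentiableOn ℂ Φ Ω) {z : ℂ} (hz : z ∈ Ω) : ContinuousAt (deriv Φ) z := by
  have hA := hΦ.analyticAt (hΩo.mem_nhds hz)
  have h1 : ContinuousAt (fun w => fderiv ℂ Φ w (1:ℂ)) z :=
    ((ContinuousLinearMap.apply ℂ ℂ (1:ℂ)).continuous.continuousAt).comp
      (hA.fderiv.continuousAt)
  have h2 : (fun w => fderiv ℂ Φ w (1:ℂ)) = deriv Φ := funext fun w => fderiv_apply_one_eq_deriv
  rwa [h2] at h1

lemma part1 (Ω : Set ℂ) (hΩo : IsOpen Ω) (Φ : ℂ → ℂ) (hΦ : DifferentiableOn ℂ Φ Ω) (τ : ℝ)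
    (v : ℂ → ℂ) (hv : ContDiff ℝ 2 v) (hvsupp : HasCompactSupport v)
    (hvΩ : tsupport v ⊆ Ω) :
    ((∫ z in Ω,
       ‖fderiv ℝ (fun w => Complex.exp (-(Complex.I * (τ : ℂ)) * ((Φ w).im : ℂ)) * v w) z 1‖ ^ 2) +
      ∫ z in Ω,
        ‖fderiv ℝ (fun w => Complex.exp (-(Complex.I * (τ : ℂ)) * ((Φ w).im : ℂ)) * v w) z
            Complex.I‖ ^ 2) =
      (∫ z in Ω, ‖2 * wDz v z - (τ : ℂ) * deriv Φ z * v z‖ ^ 2) := by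
  have hfc : Continuous (fderiv ℝ v) := (hv.fderiv_right (m := 1) (by norm_num)).continuous
  have hW : Continuous (fun z => wDz v z) := by
    show Continuous fun z => (1/2 : ℂ) * (fderiv ℝ v z 1 - Complex.I * fderiv ℝ v z Complex.I)
    exact continuous_const.mul ((hfc.clm_apply continuous_const).sub
      (continuous_const.mul (hfc.clm_apply continuous_const)))
  have hF0' : ∀ z, z ∉ tsupport v → 2 * wDz v z - (τ : ℂ) * deriv Φ z * v z = 0 := by
    intro z hz
    have h1 : fderiv ℝ v z = 0 := fderiv_zero_out hz
    have h2 : v z = 0 := image_eq_zero_of_notMem_tsupport hz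
    simp [wDz, h1, h2]
  apply integral_aux Ω _ _ 2 (smooth_g Ω hΩo Φ hΦ v hv hvΩ _) hvsupp.mul_left
  · -- continuity of F
    apply F_continuous Ω hΩo Φ hΦ v hv hvΩ _ _ hF0'
    intro z hz
    exact ((continuousAt_const.mul hW.continuousAt)).sub
      ((continuousAt_const.mul (derivPhi_continuousAt Ω hΩo Φ hΦ hz)).mul
        hv.continuous.continuousAt)
  · exact HasCompactSupport.intro hvsupp hF0'
  · -- fderiv g zero off Ω
    intro z hz
    have hz' : z ∉ tsupport v := fun h => hz (hvΩ h)
    rw [(mul_v_eventually_zero hz' _).fderiv_eq]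
    exact fderiv_const_apply 0
  · intro z hz
    exact hF0' z (fun h => hz (hvΩ h))
  · -- pointwise identity
    intro z
    by_cases hz : z ∈ Ω
    · have hd : DifferentiableAt ℂ Φ z := hΦ.differentiableAt (hΩo.mem_nhds hz)
      have hΦ' : HasDerivAt Φ (deriv Φ z) z := hd.hasDerivAt
      have hvd : DifferentiableAt ℝ v z := (hv.differentiable (by norm_num)) z
      have ea := fderiv_g_eq (-(Complex.I * (τ:ℂ))) Φ v z (deriv Φ z) hΦ' hvd 1
      have eb := fderiv_g_eq (-(Complex.I * (τ:ℂ))) Φ v z (deriv Φ z) hΦ' hvd Complex.I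
      rw [norm_sq_sub]
      have hab : fderiv ℝ (fun w => Complex.exp (-(Complex.I * (τ:ℂ)) * ((Φ w).im : ℂ)) * v w) z 1
          - Complex.I * fderiv ℝ (fun w =>
              Complex.exp (-(Complex.I * (τ:ℂ)) * ((Φ w).im : ℂ)) * v w) z Complex.I
          = Complex.exp (-(Complex.I * (τ:ℂ)) * ((Φ z).im : ℂ)) *
              (2 * wDz v z - (τ : ℂ) * deriv Φ z * v z) := by
        rw [ea, eb]
        have hc : deriv Φ z = ((deriv Φ z).re : ℂ) + ((deriv Φ z).im : ℂ) * Complex.I :=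
          (Complex.re_add_im _).symm
        simp only [wDz, one_mul, Complex.mul_im, Complex.I_re, Complex.I_im, zero_mul, one_mul,
          zero_add]
        linear_combination ((τ:ℂ) * ((deriv Φ z).re : ℂ) * v z *
            Complex.exp (-(Complex.I * (τ:ℂ)) * ((Φ z).im : ℂ))) * Complex.I_mul_I +
          ((τ:ℂ) * v z * Complex.exp (-(Complex.I * (τ:ℂ)) * ((Φ z).im : ℂ))) * hc
      rw [hab, norm_mul]
      have hE : ‖Complex.exp (-(Complex.I * (τ:ℂ)) * ((Φ z).im : ℂ))‖ = 1 := by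
        rw [Complex.norm_exp]
        simp [Complex.mul_re]
      rw [hE, one_mul]
    · have hz' : z ∉ tsupport v := fun h => hz (hvΩ h)
      have h0 : fderiv ℝ (fun w =>
          Complex.exp (-(Complex.I * (τ:ℂ)) * ((Φ w).im : ℂ)) * v w) z = 0 := by
        rw [(mul_v_eventually_zero hz' _).fderiv_eq]
        exact fderiv_const_apply 0
      rw [h0, hF0' z hz']
      simp

lemma part2 (Ω : Set ℂ) (hΩo : IsOpen Ω) (Φ : ℂ → ℂ) (hΦ : DifferentiableOn ℂ Φ Ω) (τ : ℝ)
    (v : ℂ → ℂ) (hv : ContDiff ℝ 2 v) (hvsupp : HasCompactSupport v)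
    (hvΩ : tsupport v ⊆ Ω) :
    ((∫ z in Ω,
       ‖fderiv ℝ (fun w => Complex.exp (Complex.I * (τ : ℂ) * ((Φ w).im : ℂ)) * v w) z 1‖ ^ 2) +
      ∫ z in Ω,
        ‖fderiv ℝ (fun w => Complex.exp (Complex.I * (τ : ℂ) * ((Φ w).im : ℂ)) * v w) z
            Complex.I‖ ^ 2) =
      ∫ z in Ω, ‖2 * wDzbar v z - (τ : ℂ) * starRingEnd ℂ (deriv Φ z) * v z‖ ^ 2 := by
  have hfc : Continuous (fderiv ℝ v) := (hv.fderiv_right (m := 1) (by norm_num)).continuous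
  have hW : Continuous (fun z => wDzbar v z) := by
    show Continuous fun z => (1/2 : ℂ) * (fderiv ℝ v z 1 + Complex.I * fderiv ℝ v z Complex.I)
    exact continuous_const.mul ((hfc.clm_apply continuous_const).add
      (continuous_const.mul (hfc.clm_apply continuous_const)))
  have hF0' : ∀ z, z ∉ tsupport v →
      2 * wDzbar v z - (τ : ℂ) * starRingEnd ℂ (deriv Φ z) * v z = 0 := by
    intro z hz
    have h1 : fderiv ℝ v z = 0 := fderiv_zero_out hz
    have h2 : v z = 0 := image_eq_zero_of_notMem_tsupport hz
    simp [wDzbar, h1, h2]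
  apply integral_aux Ω _ _ (-2) (smooth_g Ω hΩo Φ hΦ v hv hvΩ _) hvsupp.mul_left
  · apply F_continuous Ω hΩo Φ hΦ v hv hvΩ _ _ hF0'
    intro z hz
    exact ((continuousAt_const.mul hW.continuousAt)).sub
      ((continuousAt_const.mul ((Complex.continuous_conj.continuousAt).comp
        (derivPhi_continuousAt Ω hΩo Φ hΦ hz))).mul hv.continuous.continuousAt)
  · exact HasCompactSupport.intro hvsupp hF0'
  · intro z hz
    have hz' : z ∉ tsupport v := fun h => hz (hvΩ h)
    rw [(mul_v_eventually_zero hz' _).fderiv_eq]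
    exact fderiv_const_apply 0
  · intro z hz
    exact hF0' z (fun h => hz (hvΩ h))
  · intro z
    by_cases hz : z ∈ Ω
    · have hd : DifferentiableAt ℂ Φ z := hΦ.differentiableAt (hΩo.mem_nhds hz)
      have hΦ' : HasDerivAt Φ (deriv Φ z) z := hd.hasDerivAt
      have hvd : DifferentiableAt ℝ v z := (hv.differentiable (by norm_num)) z
      have ea := fderiv_g_eq (Complex.I * (τ:ℂ)) Φ v z (deriv Φ z) hΦ' hvd 1
      have eb := fderiv_g_eq (Complex.I * (τ:ℂ)) Φ v z (deriv Φ z) hΦ' hvd Complex.I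
      rw [norm_sq_add]
      have hconj : (starRingEnd ℂ) (deriv Φ z)
          = ((deriv Φ z).re : ℂ) - ((deriv Φ z).im : ℂ) * Complex.I := by
        apply Complex.ext <;> simp
      have hab : fderiv ℝ (fun w => Complex.exp (Complex.I * (τ:ℂ) * ((Φ w).im : ℂ)) * v w) z 1
          + Complex.I * fderiv ℝ (fun w =>
              Complex.exp (Complex.I * (τ:ℂ) * ((Φ w).im : ℂ)) * v w) z Complex.I
          = Complex.exp (Complex.I * (τ:ℂ) * ((Φ z).im : ℂ)) *
              (2 * wDzbar v z - (τ : ℂ) * starRingEnd ℂ (deriv Φ z) * v z) := by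
        rw [ea, eb]
        simp only [wDzbar, one_mul, Complex.mul_im, Complex.I_re, Complex.I_im, zero_mul,
          one_mul, zero_add]
        linear_combination ((τ:ℂ) * ((deriv Φ z).re : ℂ) * v z *
            Complex.exp (Complex.I * (τ:ℂ) * ((Φ z).im : ℂ))) * Complex.I_mul_I +
          ((τ:ℂ) * v z * Complex.exp (Complex.I * (τ:ℂ) * ((Φ z).im : ℂ))) * hconj
      rw [hab, norm_mul]
      have hE : ‖Complex.exp (Complex.I * (τ:ℂ) * ((Φ z).im : ℂ))‖ = 1 := by
        rw [Complex.norm_exp]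
        simp [Complex.mul_re]
      rw [hE, one_mul]
      ring
    · have hz' : z ∉ tsupport v := fun h => hz (hvΩ h)
      have h0 : fderiv ℝ (fun w =>
          Complex.exp (Complex.I * (τ:ℂ) * ((Φ w).im : ℂ)) * v w) z = 0 := by
        rw [(mul_v_eventually_zero hz' _).fderiv_eq]
        exact fderiv_const_apply 0
      rw [h0, hF0' z hz']
      simp

/-- Interior energy identity (Proposition 2.1 of the paper, compactly supported form):
for v ∈ C_c^∞(Ω;ℂ) and ψ = Im Φ,
‖∂_{x₁}(e^{∓iτψ}v)‖² + ‖∂_{x₂}(e^{∓iτψ}v)‖² = ‖f‖² in L²(Ω), where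
f = 2∂_z v − τ(∂_zΦ)v, resp. f = 2∂_{z̄}v − τ conj(∂_zΦ)v. -/
theorem energy_identity
    (Ω : Set ℂ) (hΩo : IsOpen Ω) (hΩb : Bornology.IsBounded Ω)
    (Φ : ℂ → ℂ) (hΦ : DifferentiableOn ℂ Φ Ω) (τ : ℝ)
    (v : ℂ → ℂ) (hv : ContDiff ℝ (⊤ : ℕ∞) v) (hvsupp : HasCompactSupport v)
    (hvΩ : tsupport v ⊆ Ω) :
    ((∫ z in Ω,
        ‖fderiv ℝ (fun w => Complex.exp (-(Complex.I * (τ : ℂ) * ((Φ w).im : ℂ))) * v w) z 1‖ ^ 2) +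
      ∫ z in Ω,
        ‖fderiv ℝ (fun w => Complex.exp (-(Complex.I * (τ : ℂ) * ((Φ w).im : ℂ))) * v w) z
            Complex.I‖ ^ 2) =
      (∫ z in Ω, ‖2 * wDz v z - (τ : ℂ) * deriv Φ z * v z‖ ^ 2) ∧
    ((∫ z in Ω,
        ‖fderiv ℝ (fun w => Complex.exp (Complex.I * (τ : ℂ) * ((Φ w).im : ℂ)) * v w) z 1‖ ^ 2) +
      ∫ z in Ω,
        ‖fderiv ℝ (fun w => Complex.exp (Complex.I * (τ : ℂ) * ((Φ w).im : ℂ)) * v w) z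
            Complex.I‖ ^ 2) =
      ∫ z in Ω, ‖2 * wDzbar v z - (τ : ℂ) * starRingEnd ℂ (deriv Φ z) * v z‖ ^ 2 := by
  have hv2 : ContDiff ℝ 2 v := hv.of_le (WithTop.coe_le_coe.mpr le_top)
  constructor
  · have hfun : ∀ w : ℂ, -(Complex.I * (τ : ℂ) * ((Φ w).im : ℂ))
        = (-(Complex.I * (τ : ℂ))) * ((Φ w).im : ℂ) := fun w => (neg_mul _ _).symm
    simp only [hfun]
    exact part1 Ω hΩo Φ hΦ τ v hv2 hvsupp hvΩ
  · exact part2 Ω hΩo Φ hΦ τ v hv2 hvsupp hvΩ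

end
end

section
/- Let Ω ⊂ ℂ be a bounded open set and Φ holomorphic on Ω with φ = Re Φ; set ψ₁ = Re(Φ') and ψ₂ = Im(Φ'). Then for every real-valued v ∈ C_c^∞(Ω) and every τ ∈ ℝ: ∫_Ω (2∂_{x₁}v + τψ₁v)² dx + ∫_Ω (2∂_{x₂}v − τψ₂v)² dx = 4∫_Ω |∇v|² dx + τ² ∫_Ω |Φ'|² v² dx. (The cross terms vanish because, by the Cauchy–Riemann equations, ∂_{x₁}ψ₁ − ∂_{x₂}ψ₂ = Δφ = 0.) -/
open MeasureTheory Complex Filter Metric ENNReal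
open Set Manifold

noncomputable section

/-- Energy identity for the real conjugated gradient terms (cross terms cancel by the
Cauchy–Riemann equations): for real-valued v ∈ C_c^∞(Ω), with ψ₁ = Re Φ', ψ₂ = Im Φ',
∫(2∂_{x₁}v + τψ₁v)² + ∫(2∂_{x₂}v − τψ₂v)² = 4∫|∇v|² + τ²∫|Φ'|²v². -/
theorem real_energy_identity
    (Ω : Set ℂ) (hΩo : IsOpen Ω) (hΩb : Bornology.IsBounded Ω)
    (Φ : ℂ → ℂ) (hΦ : DifferentiableOn ℂ Φ Ω) (τ : ℝ)
    (v : ℂ → ℝ) (hv : ContDiff ℝ (⊤ : ℕ∞) v) (hvsupp : HasCompactSupport v)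
    (hvΩ : tsupport v ⊆ Ω) :
    ((∫ z in Ω, (2 * fderiv ℝ v z 1 + τ * (deriv Φ z).re * v z) ^ 2) +
      ∫ z in Ω, (2 * fderiv ℝ v z Complex.I - τ * (deriv Φ z).im * v z) ^ 2) =
      4 * (∫ z in Ω, ((fderiv ℝ v z 1) ^ 2 + (fderiv ℝ v z Complex.I) ^ 2)) +
        τ ^ 2 * ∫ z in Ω, ‖deriv Φ z‖ ^ 2 * v z ^ 2 := by
  obtain ⟨L, hLc, hKL, hLΩ⟩ := exists_compact_between hvsupp hΩo hvΩ
  obtain ⟨χ, hχ1, hχ0, hχ01⟩ :=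
    exists_contMDiffMap_one_nhds_of_subset_interior 𝓘(ℝ, ℂ) (n := (⊤ : ℕ∞)) (isClosed_tsupport v) hKL
  have hχ : ContDiff ℝ 1 χ :=
    (contMDiff_iff_contDiff.mp χ.contMDiff).of_le (by exact_mod_cast le_top)
  have hA : AnalyticOnNhd ℂ (deriv Φ) Ω := (hΦ.analyticOnNhd hΩo).deriv
  have hAc : ContDiffOn ℝ 1 (deriv Φ) Ω := (hA.contDiffOn hΩo.uniqueDiffOn).restrict_scalars ℝ
  set g : ℂ → ℂ := fun z => (χ z : ℝ) • deriv Φ z with hg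
  have hgeq : ∀ z ∈ tsupport v, ∀ᶠ w in nhds z, g w = deriv Φ w := by
    intro z hz
    filter_upwards [eventually_nhdsSet_iff_forall.mp hχ1 z hz] with w hw
    simp [hg, hw]
  have hgK : ∀ z ∈ tsupport v, g z = deriv Φ z := fun z hz => (hgeq z hz).self_of_nhds
  have hgC : ContDiff ℝ 1 g := by
    rw [contDiff_iff_contDiffAt]
    intro z
    by_cases hzΩ : z ∈ Ω
    · exact ((hχ.contDiffOn.smul hAc).contDiffAt (hΩo.mem_nhds hzΩ))
    · have hzL : z ∈ (Lᶜ : Set ℂ) := fun h => hzΩ (hLΩ h)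
      have : ∀ᶠ w in nhds z, g w = 0 := by
        filter_upwards [hLc.isClosed.isOpen_compl.mem_nhds hzL] with w hw
        simp [hg, hχ0 w hw]
      exact (contDiffAt_const (c := (0:ℂ))).congr_of_eventuallyEq this
  -- real and imaginary parts
  set p : ℂ → ℝ := fun z => (g z).re with hp
  set q : ℂ → ℝ := fun z => (g z).im with hq
  have hpC : ContDiff ℝ 1 p := Complex.reCLM.contDiff.comp hgC
  have hqC : ContDiff ℝ 1 q := Complex.imCLM.contDiff.comp hgC
  -- v and u = v^2
  have hv1 : ContDiff ℝ 1 v := hv.of_le (by simp)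
  set u : ℂ → ℝ := fun z => v z * v z with hu
  have huC : ContDiff ℝ 1 u := hv1.mul hv1
  -- the direction derivatives of v
  set a : ℂ → ℝ := fun z => fderiv ℝ v z 1 with ha
  set b : ℂ → ℝ := fun z => fderiv ℝ v z Complex.I with hb
  have hvd : Differentiable ℝ v := hv1.differentiable one_ne_zero
  have haC : Continuous a :=
    (hv1.continuous_fderiv one_ne_zero).clm_apply continuous_const
  have hbC : Continuous b :=
    (hv1.continuous_fderiv one_ne_zero).clm_apply continuous_const
  -- vanishing off tsupport v
  have hKint : tsupport v ⊆ interior L := hKL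
  have hKL' : tsupport v ⊆ L := hKL.trans interior_subset
  have hv0 : ∀ z, z ∉ tsupport v → v z = 0 := fun z hz => image_eq_zero_of_notMem_tsupport hz
  have ha0 : ∀ z, z ∉ tsupport v → a z = 0 := by
    intro z hz
    have : fderiv ℝ v z = 0 := by
      have := support_fderiv_subset ℝ (f := v)
      by_contra h
      exact hz (this h)
    simp [ha, this]
  have hb0 : ∀ z, z ∉ tsupport v → b z = 0 := by
    intro z hz
    have : fderiv ℝ v z = 0 := by
      have := support_fderiv_subset ℝ (f := v)
      by_contra h
      exact hz (this h)
    simp [hb, this]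
  -- integrability helper
  have hint : ∀ f : ℂ → ℝ, Continuous f → (∀ z, z ∉ L → f z = 0) → Integrable f :=
    fun f hf h0 => hf.integrable_of_hasCompactSupport (HasCompactSupport.intro hLc h0)
  have hp0 : ∀ z, z ∉ L → p z = 0 := by intro z hz; simp [hp, hg, hχ0 z hz]
  have hq0 : ∀ z, z ∉ L → q z = 0 := by intro z hz; simp [hq, hg, hχ0 z hz]
  have hvL : ∀ z, z ∉ L → v z = 0 := fun z hz => hv0 z (fun h => hz (hKL' h))
  have haL : ∀ z, z ∉ L → a z = 0 := fun z hz => ha0 z (fun h => hz (hKL' h))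
  have hbL : ∀ z, z ∉ L → b z = 0 := fun z hz => hb0 z (fun h => hz (hKL' h))
  -- fderiv of u
  have hu' : ∀ z w, fderiv ℝ u z w = 2 * v z * fderiv ℝ v z w := by
    intro z w
    have h1 : HasFDerivAt u (v z • fderiv ℝ v z + v z • fderiv ℝ v z) z :=
      (hvd z).hasFDerivAt.mul (hvd z).hasFDerivAt
    rw [h1.fderiv]
    simp [ContinuousLinearMap.add_apply]
    ring
  -- continuity helpers for fderiv of p, q, u
  have hpdC : Continuous fun z => fderiv ℝ p z 1 :=
    (hpC.continuous_fderiv one_ne_zero).clm_apply continuous_const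
  have hqdC : Continuous fun z => fderiv ℝ q z Complex.I :=
    (hqC.continuous_fderiv one_ne_zero).clm_apply continuous_const
  have hu1C : Continuous fun z => fderiv ℝ u z 1 :=
    (huC.continuous_fderiv one_ne_zero).clm_apply continuous_const
  have huIC : Continuous fun z => fderiv ℝ u z Complex.I :=
    (huC.continuous_fderiv one_ne_zero).clm_apply continuous_const
  have hpc : Continuous p := hpC.continuous
  have hqc : Continuous q := hqC.continuous
  have hvc : Continuous v := hv1.continuous
  have huc : Continuous u := huC.continuous
  have hu0 : ∀ z, z ∉ L → u z = 0 := by intro z hz; simp [hu, hvL z hz]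
  -- Cauchy-Riemann at points of tsupport v
  have hcr : ∀ z ∈ tsupport v, fderiv ℝ p z 1 = fderiv ℝ q z Complex.I := by
    intro z hz
    have hzΩ : z ∈ Ω := hvΩ hz
    have hd : DifferentiableAt ℂ (deriv Φ) z := (hA z hzΩ).differentiableAt
    set c : ℂ := deriv (deriv Φ) z with hc
    have hF : HasDerivAt (deriv Φ) c z := hd.hasDerivAt
    have hF' : HasFDerivAt (deriv Φ)
        (((1 : ℂ →L[ℂ] ℂ).smulRight c).restrictScalars ℝ) z :=
      (hasDerivAt_iff_hasFDerivAt.mp hF).restrictScalars ℝ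
    have hre : HasFDerivAt (fun w => (deriv Φ w).re)
        (Complex.reCLM.comp (((1 : ℂ →L[ℂ] ℂ).smulRight c).restrictScalars ℝ)) z :=
      Complex.reCLM.hasFDerivAt.comp z hF'
    have him : HasFDerivAt (fun w => (deriv Φ w).im)
        (Complex.imCLM.comp (((1 : ℂ →L[ℂ] ℂ).smulRight c).restrictScalars ℝ)) z :=
      Complex.imCLM.hasFDerivAt.comp z hF'
    have hpe : fderiv ℝ p z = fderiv ℝ (fun w => (deriv Φ w).re) z := by
      apply Filter.EventuallyEq.fderiv_eq
      filter_upwards [hgeq z hz] with w hw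
      simp [hp, hw]
    have hqe : fderiv ℝ q z = fderiv ℝ (fun w => (deriv Φ w).im) z := by
      apply Filter.EventuallyEq.fderiv_eq
      filter_upwards [hgeq z hz] with w hw
      simp [hq, hw]
    rw [hpe, hqe, hre.fderiv, him.fderiv]
    simp [Complex.mul_re, Complex.mul_im]
  -- Integration by parts, twice
  have hpd : Differentiable ℝ p := hpC.differentiable one_ne_zero
  have hqd : Differentiable ℝ q := hqC.differentiable one_ne_zero
  have hud : Differentiable ℝ u := huC.differentiable one_ne_zero
  have ibp1 : ∫ z, p z * fderiv ℝ u z 1 = - ∫ z, fderiv ℝ p z 1 * u z := by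
    apply integral_mul_fderiv_eq_neg_fderiv_mul_of_integrable
    · exact hint _ (hpdC.mul huc) (fun z hz => by simp [hu0 z hz])
    · exact hint _ (hpc.mul hu1C) (fun z hz => by simp [hp0 z hz])
    · exact hint _ (hpc.mul huc) (fun z hz => by simp [hp0 z hz])
    · exact fun x _ => hpd x
    · exact fun x _ => hud x
  have ibp2 : ∫ z, q z * fderiv ℝ u z Complex.I = - ∫ z, fderiv ℝ q z Complex.I * u z := by
    apply integral_mul_fderiv_eq_neg_fderiv_mul_of_integrable
    · exact hint _ (hqdC.mul huc) (fun z hz => by simp [hu0 z hz])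
    · exact hint _ (hqc.mul huIC) (fun z hz => by simp [hq0 z hz])
    · exact hint _ (hqc.mul huc) (fun z hz => by simp [hq0 z hz])
    · exact fun x _ => hqd x
    · exact fun x _ => hud x
  have hsame : (∫ z, fderiv ℝ p z 1 * u z) = ∫ z, fderiv ℝ q z Complex.I * u z := by
    apply integral_congr_ae
    apply Filter.EventuallyEq.of_eq
    funext z
    by_cases hz : z ∈ tsupport v
    · rw [hcr z hz]
    · simp [hu, hv0 z hz]
  -- cross term vanishes
  have hX : ∫ z, (p z * (v z * a z) - q z * (v z * b z)) = 0 := by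
    have e1 : ∀ z, p z * (v z * a z) - q z * (v z * b z)
        = (1/2) * (p z * fderiv ℝ u z 1) - (1/2) * (q z * fderiv ℝ u z Complex.I) := by
      intro z
      rw [hu' z 1, hu' z Complex.I]
      simp only [ha, hb]
      ring
    rw [integral_congr_ae (Filter.EventuallyEq.of_eq (funext e1))]
    have i1 : Integrable (fun z => p z * fderiv ℝ u z 1) :=
      hint _ (hpc.mul hu1C) (fun z hz => by simp [hp0 z hz])
    have i2 : Integrable (fun z => q z * fderiv ℝ u z Complex.I) :=
      hint _ (hqc.mul huIC) (fun z hz => by simp [hq0 z hz])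
    rw [integral_sub (i1.const_mul _) (i2.const_mul _), integral_const_mul,
      integral_const_mul, ibp1, ibp2, hsame]
    ring
  -- rewrite the set integrals as full-space integrals
  have m : MeasurableSet Ω := hΩo.measurableSet
  have hnK : ∀ z, z ∉ Ω → z ∉ tsupport v := fun z hz h => hz (hvΩ h)
  have E1 : (∫ z in Ω, (2 * fderiv ℝ v z 1 + τ * (deriv Φ z).re * v z) ^ 2)
      = ∫ z, (2 * a z + τ * p z * v z) ^ 2 := by
    rw [setIntegral_congr_fun m (g := fun z => (2 * a z + τ * p z * v z) ^ 2) ?_]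
    · exact setIntegral_eq_integral_of_forall_compl_eq_zero fun z hz => by
        simp [ha0 z (hnK z hz), hv0 z (hnK z hz)]
    · intro z hz
      by_cases hz' : z ∈ tsupport v
      · simp [hp, hgK z hz', ha]
      · simp [hv0 z hz', ha]
  have E2 : (∫ z in Ω, (2 * fderiv ℝ v z Complex.I - τ * (deriv Φ z).im * v z) ^ 2)
      = ∫ z, (2 * b z - τ * q z * v z) ^ 2 := by
    rw [setIntegral_congr_fun m (g := fun z => (2 * b z - τ * q z * v z) ^ 2) ?_]
    · exact setIntegral_eq_integral_of_forall_compl_eq_zero fun z hz => by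
        simp [hb0 z (hnK z hz), hv0 z (hnK z hz)]
    · intro z hz
      by_cases hz' : z ∈ tsupport v
      · simp [hq, hgK z hz', hb]
      · simp [hv0 z hz', hb]
  have E3 : (∫ z in Ω, ‖deriv Φ z‖ ^ 2 * v z ^ 2)
      = ∫ z, (p z ^ 2 + q z ^ 2) * u z := by
    rw [setIntegral_congr_fun m (g := fun z => (p z ^ 2 + q z ^ 2) * u z) ?_]
    · exact setIntegral_eq_integral_of_forall_compl_eq_zero fun z hz => by
        simp [hu, hv0 z (hnK z hz)]
    · intro z hz
      by_cases hz' : z ∈ tsupport v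
      · have hzz := hgK z hz'
        simp only [hp, hq, hu, Complex.sq_norm, Complex.normSq_apply, ← hzz]
        ring
      · simp [hu, hv0 z hz']
  have E4 : (∫ z in Ω, ((fderiv ℝ v z 1) ^ 2 + (fderiv ℝ v z Complex.I) ^ 2))
      = ∫ z, (a z ^ 2 + b z ^ 2) := by
    rw [setIntegral_congr_fun m (g := fun z => (a z ^ 2 + b z ^ 2)) ?_]
    · exact setIntegral_eq_integral_of_forall_compl_eq_zero fun z hz => by
        simp [ha0 z (hnK z hz), hb0 z (hnK z hz)]
    · intro z _
      simp [ha, hb]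
  rw [E1, E2, E3, E4]
  have intF1 : Integrable (fun z => (2 * a z + τ * p z * v z) ^ 2) :=
    hint _ (((continuous_const.mul haC).add
      ((continuous_const.mul hpc).mul hvc)).pow 2)
      (fun z hz => by simp [haL z hz, hvL z hz])
  have intF2 : Integrable (fun z => (2 * b z - τ * q z * v z) ^ 2) :=
    hint _ (((continuous_const.mul hbC).sub
      ((continuous_const.mul hqc).mul hvc)).pow 2)
      (fun z hz => by simp [hbL z hz, hvL z hz])
  have intAB : Integrable (fun z => a z ^ 2 + b z ^ 2) :=
    hint _ ((haC.pow 2).add (hbC.pow 2))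
      (fun z hz => by simp [haL z hz, hbL z hz])
  have intC : Integrable (fun z => (p z ^ 2 + q z ^ 2) * u z) :=
    hint _ (((hpc.pow 2).add (hqc.pow 2)).mul huc)
      (fun z hz => by simp [hu0 z hz])
  have intX : Integrable (fun z => p z * (v z * a z) - q z * (v z * b z)) :=
    hint _ ((hpc.mul (hvc.mul haC)).sub (hqc.mul (hvc.mul hbC)))
      (fun z hz => by simp [hvL z hz])
  have intS : Integrable
      (fun z => 4 * (a z ^ 2 + b z ^ 2) + τ ^ 2 * ((p z ^ 2 + q z ^ 2) * u z)) volume :=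
    (intAB.const_mul 4).add (intC.const_mul (τ ^ 2))
  have intT : Integrable
      (fun z => 4 * τ * (p z * (v z * a z) - q z * (v z * b z))) volume :=
    intX.const_mul (4 * τ)
  have key : ∀ z, (2 * a z + τ * p z * v z) ^ 2 + (2 * b z - τ * q z * v z) ^ 2
      = 4 * (a z ^ 2 + b z ^ 2) + τ ^ 2 * ((p z ^ 2 + q z ^ 2) * u z)
        + 4 * τ * (p z * (v z * a z) - q z * (v z * b z)) := by
    intro z
    simp only [hu]
    ring
  calc (∫ z, (2 * a z + τ * p z * v z) ^ 2) + ∫ z, (2 * b z - τ * q z * v z) ^ 2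
      = ∫ z, ((2 * a z + τ * p z * v z) ^ 2 + (2 * b z - τ * q z * v z) ^ 2) :=
        (integral_add intF1 intF2).symm
    _ = ∫ z, (4 * (a z ^ 2 + b z ^ 2) + τ ^ 2 * ((p z ^ 2 + q z ^ 2) * u z)
          + 4 * τ * (p z * (v z * a z) - q z * (v z * b z))) :=
        integral_congr_ae (Filter.EventuallyEq.of_eq (funext key))
    _ = (∫ z, (4 * (a z ^ 2 + b z ^ 2) + τ ^ 2 * ((p z ^ 2 + q z ^ 2) * u z)))
          + ∫ z, 4 * τ * (p z * (v z * a z) - q z * (v z * b z)) := integral_add intS intT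
    _ = (∫ z, 4 * (a z ^ 2 + b z ^ 2)) + (∫ z, τ ^ 2 * ((p z ^ 2 + q z ^ 2) * u z))
          + 4 * τ * ∫ z, (p z * (v z * a z) - q z * (v z * b z)) := by
        rw [integral_add (intAB.const_mul 4) (intC.const_mul (τ ^ 2)), integral_const_mul, integral_const_mul, integral_const_mul]
    _ = 4 * (∫ z, (a z ^ 2 + b z ^ 2)) + τ ^ 2 * ∫ z, ((p z ^ 2 + q z ^ 2) * u z) := by
        rw [hX, mul_zero, add_zero, integral_const_mul, integral_const_mul]

end
end
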